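/- Let α > 1, δ > 0, l_max ≥ 0, and K ≥ 1 an integer. Suppose for each ℓ ∈ {1,...,K}, B_ℓ ≤ l_max·(α/(α-1) + 1)·(1+δ)^ℓ + Π_ℓ + p_ℓ, where p_ℓ ≤ (1+δ)^ℓ and the Π_ℓ satisfy Σ_{t≤ℓ} Π_t ≤ (α/(α-1))(1+δ)^ℓ for all ℓ. If a task has α·C̄ ≥ (1+δ)^{ℓ-1} (i.e., (1+δ)^ℓ ≤ α(1+δ)·C̄), then Σ_{ℓ'≤ℓ} B_{ℓ'} ≤ α·((l_max+1)·α/(α-1) + l_max·α/(δ(α-1)) + l_max + 1 + (l_max+1)/δ)·(1+δ)·C̄. -/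

import Mathlib

/-!
Summed over `t ≤ ℓ`, the geometric terms `(1+δ)^t` (and the `p_t` they dominate) total at most
`(1+δ)^ℓ (1+δ)/δ`, while the loads form a single prefix sum, bounded by `α/(α-1) · (1+δ)^ℓ`.
Hence the total makespan is a fixed multiple of `(1+δ)^ℓ ≤ α (1+δ) C̄`.
-/

open Finset

theorem sum_Icc_one_pow_le {r : ℝ} (hr : 1 < r) (n : ℕ) :
    ∑ t ∈ Icc 1 n, r ^ t ≤ r ^ n * r / (r - 1) := by
  rw [← Ico_add_one_right_eq_Icc, geom_sum_Ico hr.ne' (by omega), pow_succ]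
  gcongr
  linarith

theorem sum_Icc_le_mul_pow_of_block_le {β r c : ℝ} {ℓ : ℕ} (hr : 1 < r) (hc : 0 ≤ c)
    (B Load p : ℕ → ℝ)
    (hB : ∀ t ∈ Icc 1 ℓ, B t ≤ c * r ^ t + Load t + p t)
    (hp : ∀ t ∈ Icc 1 ℓ, p t ≤ r ^ t)
    (hLoad : ∑ t ∈ Icc 1 ℓ, Load t ≤ β * r ^ ℓ) :
    ∑ t ∈ Icc 1 ℓ, B t ≤ ((c + 1) * (r / (r - 1)) + β) * r ^ ℓ := by
  have hgeom := sum_Icc_one_pow_le hr ℓ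
  have hp_sum : ∑ t ∈ Icc 1 ℓ, p t ≤ ∑ t ∈ Icc 1 ℓ, r ^ t := sum_le_sum hp
  calc ∑ t ∈ Icc 1 ℓ, B t
      ≤ ∑ t ∈ Icc 1 ℓ, (c * r ^ t + Load t + p t) := sum_le_sum hB
    _ = c * ∑ t ∈ Icc 1 ℓ, r ^ t + ∑ t ∈ Icc 1 ℓ, Load t + ∑ t ∈ Icc 1 ℓ, p t := by
      rw [sum_add_distrib, sum_add_distrib, mul_sum]
    _ ≤ c * (r ^ ℓ * r / (r - 1)) + β * r ^ ℓ + r ^ ℓ * r / (r - 1) := by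
      gcongr
      exact hp_sum.trans hgeom
    _ = ((c + 1) * (r / (r - 1)) + β) * r ^ ℓ := by ring

theorem stmt_8_general (α δ C : ℝ) (lmax K ℓ : ℕ)
    (hα : 1 < α) (hδ : 0 < δ) (hℓ : ℓ ∈ Finset.Icc 1 K)
    (B Load p : ℕ → ℝ)
    (hB : ∀ t ∈ Finset.Icc 1 K,
      B t ≤ (lmax : ℝ) * (α / (α - 1) + 1) * (1 + δ) ^ t + Load t + p t)
    (hp : ∀ t ∈ Finset.Icc 1 K, p t ≤ (1 + δ) ^ t)
    (hLoad : ∀ t ∈ Finset.Icc 1 K,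
      ∑ s ∈ Finset.Icc 1 t, Load s ≤ (α / (α - 1)) * (1 + δ) ^ t)
    (hC : (1 + δ) ^ ℓ ≤ α * (1 + δ) * C) :
    ∑ t ∈ Finset.Icc 1 ℓ, B t ≤
      α * ((lmax + 1 : ℝ) * (α / (α - 1)) + (lmax : ℝ) * (α / (δ * (α - 1)))
        + (lmax : ℝ) + 1 + ((lmax : ℝ) + 1) / δ) * (1 + δ) * C := by
  have hsub : Icc 1 ℓ ⊆ Icc 1 K := Icc_subset_Icc_right (mem_Icc.mp hℓ).2
  have hα' : 0 < α - 1 := by linarith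
  have hsum := sum_Icc_le_mul_pow_of_block_le (by linarith) (by positivity) B Load p
    (fun t ht => hB t (hsub ht)) (fun t ht => hp t (hsub ht)) (hLoad ℓ hℓ)
  have hcoef : ((lmax : ℝ) * (α / (α - 1) + 1) + 1) * ((1 + δ) / (1 + δ - 1)) + α / (α - 1)
      = (lmax + 1 : ℝ) * (α / (α - 1)) + (lmax : ℝ) * (α / (δ * (α - 1)))
        + (lmax : ℝ) + 1 + ((lmax : ℝ) + 1) / δ := by
    rw [add_sub_cancel_left]
    field_simp
    ring
  rw [hcoef] at hsum
  calc _ ≤ _ := hsum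
    _ ≤ _ * (α * (1 + δ) * C) := by gcongr
    _ = _ := by ring

/-- Completion-time accounting of Theorem 3: summing the block makespans
B_{ℓ'} for ℓ' ≤ ℓ and using (1+δ)^ℓ ≤ α(1+δ)·C̄ yields the approximation bound. -/
theorem stmt_8 (α δ C : ℝ) (lmax K ℓ : ℕ)
    (hα : 1 < α) (hδ : 0 < δ) (hK : 1 ≤ K) (hℓ : ℓ ∈ Finset.Icc 1 K)
    (B Load p : ℕ → ℝ)
    (hB : ∀ t ∈ Finset.Icc 1 K,
      B t ≤ (lmax : ℝ) * (α / (α - 1) + 1) * (1 + δ) ^ t + Load t + p t)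
    (hp : ∀ t ∈ Finset.Icc 1 K, p t ≤ (1 + δ) ^ t)
    (hLoad : ∀ t ∈ Finset.Icc 1 K,
      ∑ s ∈ Finset.Icc 1 t, Load s ≤ (α / (α - 1)) * (1 + δ) ^ t)
    (hC : (1 + δ) ^ ℓ ≤ α * (1 + δ) * C) :
    ∑ t ∈ Finset.Icc 1 ℓ, B t ≤
      α * ((lmax + 1 : ℝ) * (α / (α - 1)) + (lmax : ℝ) * (α / (δ * (α - 1)))
        + (lmax : ℝ) + 1 + ((lmax : ℝ) + 1) / δ) * (1 + δ) * C :=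
  stmt_8_general α δ C lmax K ℓ hα hδ hℓ B Load p hB hp hLoad hC
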